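/- arXiv:1702.04821 — 2 statements merged into one kernel-verified Lean document; each statement's English description precedes it below -/
import Mathlib

section
/- Let b(n) = ∑_{i=0}^{n} C(n, i)^3 (the n-th Franel number). Then for every nonnegative integer n, (n+2)^2 * b(n+2) - (7n^2 + 21n + 16) * b(n+1) - 8 * (n+1)^2 * b(n) = 0. -/
/-!
Creative telescoping (Zeilberger). Put `c j = C(n+1, j)`. Pascal's rule gives
`C(n+2, j+1) = c j + c (j+1)` and `(n+1-j) c j = (n+1) C(n, j)`, so `(n+1)^3` times the
left-hand side is, up to the boundary terms `C(n+2, 0)` and `c (n+2) = 0`, a sum over `j` of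
cubic forms in `c j, c (j+1)`. Using `(j+1) c (j+1) = (n+1-j) c j`, each of them equals
`G (j+1) - G j` for `G j = c j ^ 3 * franelCert n j`, so the sum telescopes.
-/

/-- `b n = ∑_{i=0}^{n} C(n, i)^3` (the n-th Franel number), viewed in `ℤ`. -/
def b (n : ℕ) : ℤ :=
  ∑ i ∈ Finset.range (n + 1), ((Nat.choose n i : ℤ)) ^ 3

open Finset

/-- The certificate of the telescoping, found by Zeilberger's algorithm. -/
def franelCert {R : Type*} [CommRing R] (n j : R) : R :=
  n^5 + 7*n^4 + 3*n^4*j + 19*n^3 + 15*n^3*j + 6*n^3*j^2 + 25*n^2 + 27*n^2*j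
    + 18*n^2*j^2 - 4*n^2*j^3 + 16*n + 21*n*j + 18*n*j^2 - 8*n*j^3
    + 4 + 6*j + 6*j^2 - 4*j^3

theorem franelCert_zero {R : Type*} [CommRing R] (n : R) :
    franelCert n 0 = (n + 1) ^ 3 * (n + 2) ^ 2 := by
  unfold franelCert
  ring

theorem franel_summand_eq_sub {R : Type*} [CommRing R] {n j x y : R}
    (h : (j + 1) * y = (n + 1 - j) * x) :
    (n + 2) ^ 2 * (n + 1) ^ 3 * (x + y) ^ 3 - (7 * n ^ 2 + 21 * n + 16) * (n + 1) ^ 3 * x ^ 3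
        - 8 * (n + 1) ^ 2 * ((n + 1 - j) * x) ^ 3
      = y ^ 3 * franelCert n (j + 1) - x ^ 3 * franelCert n j := by
  linear_combination (norm := (unfold franelCert; ring1))
    (-(((-16 : R) + 14*j - 4*j^2 - 61*n + 42*n*j - 8*n*j^2 - 87*n^2
      + 42*n^2*j - 4*n^2*j^2 - 55*n^3 + 14*n^3*j - 13*n^4) * x^2
    + ((-4 : R) - 6*j + 4*j^2 - 9*n - 22*n*j + 8*n*j^2 - 3*n^2 - 26*n^2*j
      + 4*n^2*j^2 + 5*n^3 - 10*n^3*j + 3*n^4) * x * y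
    + ((8 : R) - 2*j - 4*j^2 + 31*n + 2*n*j - 8*n*j^2 + 41*n^2 + 10*n^2*j
      - 4*n^2*j^2 + 21*n^3 + 6*n^3*j + 3*n^4) * y^2)) * h

theorem cast_add_one_mul_choose_succ {R : Type*} [Ring R] (m j : ℕ) :
    ((j : R) + 1) * (m.choose (j + 1) : R) = ((m : R) - j) * (m.choose j : R) := by
  rcases le_or_gt j m with hjm | hmj
  · have h := congrArg (Nat.cast : ℕ → R) (Nat.choose_succ_right_eq m j)
    push_cast [Nat.cast_sub hjm] at h
    rw [← (Nat.cast_commute _ _).eq, h, (Nat.cast_commute _ _).eq]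
  · rw [Nat.choose_eq_zero_of_lt (by omega), Nat.choose_eq_zero_of_lt hmj]
    simp

theorem sum_choose_add_choose_succ_pow_three (n : ℕ) :
    ∑ j ∈ range (n + 2), (((n + 1).choose j : ℤ) + ((n + 1).choose (j + 1) : ℤ)) ^ 3
      = b (n + 2) - 1 := by
  rw [b, sum_range_succ' _ (n + 2), Nat.choose_zero_right, Nat.cast_one, one_pow, add_sub_cancel_right]
  refine sum_congr rfl fun j _ => ?_
  rw [Nat.choose_succ_succ' (n + 1) j, Nat.cast_add]

theorem sum_sub_mul_choose_pow_three (n : ℕ) :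
    ∑ j ∈ range (n + 2), (((n : ℤ) + 1 - j) * ((n + 1).choose j : ℤ)) ^ 3
      = ((n : ℤ) + 1) ^ 3 * b n := by
  have hpascal (j : ℕ) : ((n : ℤ) + 1 - j) * ((n + 1).choose j : ℤ)
      = ((n : ℤ) + 1) * (n.choose j : ℤ) := by
    have h := cast_add_one_mul_choose_succ (R := ℤ) (n + 1) j
    have h' := congrArg (Nat.cast : ℕ → ℤ) (Nat.add_one_mul_choose_eq n j)
    push_cast at h h'
    linarith
  simp only [hpascal, mul_pow, ← mul_sum, b, sum_range_succ _ (n + 1), Nat.choose_succ_self]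
  simp

theorem sum_franel_summand (n : ℕ) :
    ∑ j ∈ range (n + 2),
      (((n : ℤ) + 2) ^ 2 * ((n : ℤ) + 1) ^ 3
          * (((n + 1).choose j : ℤ) + ((n + 1).choose (j + 1) : ℤ)) ^ 3
        - (7 * (n : ℤ) ^ 2 + 21 * n + 16) * ((n : ℤ) + 1) ^ 3 * ((n + 1).choose j : ℤ) ^ 3
        - 8 * ((n : ℤ) + 1) ^ 2 * (((n : ℤ) + 1 - j) * ((n + 1).choose j : ℤ)) ^ 3)
      = -(((n : ℤ) + 1) ^ 3 * ((n : ℤ) + 2) ^ 2) := by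
  have htel (j : ℕ) := franel_summand_eq_sub (n := (n : ℤ)) (j := (j : ℤ))
    (by simpa using cast_add_one_mul_choose_succ (R := ℤ) (n + 1) j)
  have hsum := sum_range_sub (fun j => ((n + 1).choose j : ℤ) ^ 3 * franelCert (n : ℤ) j) (n + 2)
  push_cast at hsum
  rw [sum_congr rfl fun j _ => htel j, hsum]
  simp [franelCert_zero]

theorem stmt_13 (n : ℕ) :
    ((n : ℤ) + 2) ^ 2 * b (n + 2) - (7 * (n : ℤ) ^ 2 + 21 * n + 16) * b (n + 1) -
      8 * ((n : ℤ) + 1) ^ 2 * b n = 0 := by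
  have h := sum_franel_summand n
  rw [sum_sub_distrib, sum_sub_distrib, ← mul_sum, ← mul_sum, ← mul_sum,
    sum_choose_add_choose_succ_pow_three, sum_sub_mul_choose_pow_three] at h
  have key : ((n : ℤ) + 1) ^ 3 *
      (((n : ℤ) + 2) ^ 2 * b (n + 2) - (7 * (n : ℤ) ^ 2 + 21 * n + 16) * b (n + 1) -
        8 * ((n : ℤ) + 1) ^ 2 * b n) = 0 := by
    have hb : b (n + 1) = ∑ j ∈ range (n + 2), ((n + 1).choose j : ℤ) ^ 3 := rfl
    linear_combination h - (7 * (n : ℤ) ^ 2 + 21 * n + 16) * ((n : ℤ) + 1) ^ 3 * hb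
  exact (mul_eq_zero.mp key).resolve_left (by positivity)
end

section
/- For every nonnegative integer n, C(2n, n) * 2^n = 2 * ∑_{0 ≤ i < j ≤ n} C(n, i) * C(n, j)^2 + ∑_{i=0}^{n} C(n, i)^3, where the first sum on the right ranges over pairs of integers (i, j) with 0 ≤ i < j ≤ n. -/
/-!
Expanding `C(2n, n) 2^n = (∑ᵢ C(n,i)) (∑ⱼ C(n,j)²)` gives a sum over the full square
`0 ≤ i, j ≤ n`. Split it into the diagonal, which contributes `∑ C(n,i)³`, and the two
off-diagonal triangles. The reflection `(i, j) ↦ (n - j, n - i)` preserves `i < j` and, by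
`C(n, k) = C(n, n - k)`, carries the triangle sum of `C(n,j) C(n,i)²` to that of
`C(n,i) C(n,j)²`, so the two triangles are equal.
-/

open Finset

section Triangle

variable {M : Type*} [AddCommMonoid M]

theorem sum_range_sum_range_eq_sum_triangle_add_sum_diag (f : ℕ → ℕ → M) (m : ℕ) :
    ∑ j ∈ range m, ∑ i ∈ range m, f i j =
      ∑ j ∈ range m, ∑ i ∈ range j, (f i j + f j i) + ∑ j ∈ range m, f j j := by
  induction m with
  | zero => simp
  | succ m ih =>
    simp only [sum_range_succ, sum_add_distrib] at ih ⊢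
    rw [ih]
    abel

theorem sum_triangle_reflect (f : ℕ → ℕ → M) (n : ℕ) :
    ∑ j ∈ range (n + 1), ∑ i ∈ range j, f (n - j) (n - i) =
      ∑ j ∈ range (n + 1), ∑ i ∈ range j, f i j := by
  rw [sum_sigma', sum_sigma']
  refine sum_nbij' (fun p => ⟨n - p.2, n - p.1⟩) (fun p => ⟨n - p.2, n - p.1⟩)
    ?_ ?_ ?_ ?_ ?_ <;>
    rintro ⟨j, i⟩ h <;>
    simp only [mem_sigma, mem_range] at h ⊢
  · omega
  · omega
  · congr 1 <;> omega
  · congr 1 <;> omega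

end Triangle

theorem Nat.sum_triangle_choose_mul_choose_sq_symm (n : ℕ) :
    ∑ j ∈ range (n + 1), ∑ i ∈ range j, n.choose j * n.choose i ^ 2 =
      ∑ j ∈ range (n + 1), ∑ i ∈ range j, n.choose i * n.choose j ^ 2 := by
  rw [← sum_triangle_reflect]
  refine sum_congr rfl fun j hj => sum_congr rfl fun i hi => ?_
  have hj : j ≤ n := Nat.lt_succ_iff.mp (mem_range.mp hj)
  have hi : i ≤ n := by have := mem_range.mp hi; omega
  rw [Nat.choose_symm hj, Nat.choose_symm hi]

theorem stmt_16 (n : ℕ) :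
    Nat.choose (2 * n) n * 2 ^ n =
    2 * (∑ j ∈ Finset.range (n + 1), ∑ i ∈ Finset.range j,
          Nat.choose n i * (Nat.choose n j) ^ 2) +
      ∑ i ∈ Finset.range (n + 1), (Nat.choose n i) ^ 3 := by
  have hsquare : ∑ j ∈ range (n + 1), ∑ i ∈ range (n + 1), n.choose i * n.choose j ^ 2 =
      Nat.choose (2 * n) n * 2 ^ n := by
    simp only [← sum_mul, Nat.sum_range_choose, Nat.sum_range_choose_sq, mul_comm]
  rw [← hsquare, sum_range_sum_range_eq_sum_triangle_add_sum_diag]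
  simp only [sum_add_distrib, Nat.sum_triangle_choose_mul_choose_sq_symm, ← pow_succ']
  ring
end
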